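/- In the hardness reduction graph D for Weighted Directed Multicut, consider a single synchronization gadget: three directed paths X = (x_n, x̂_n, x_{n−1}, ..., x̂_1, x_0), Z = (z_n, ẑ_n, ..., ẑ_1, z_0), Y = (y_n, ŷ_n, ..., ŷ_1, y_0) on 2n+1 vertices each, with cross edges (x_a, z_a) and (z_a, y_a) for all a ∈ {0,...,n}, where the vertices x_a, z_a, y_a are undeletable and x̂_a, ẑ_a, ŷ_a are deletable, plus a source s with arc (s, x_n) and sink t with arcs (x_0, t) and (y_0, t). If S is a set of deletable vertices with S ∩ X = {x̂_a}, S ∩ Y = {ŷ_b} and a < b, then there is an s-to-t path in the gadget avoiding S. -/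
import Mathlib


/-- Vertices of the synchronization gadget: the undeletable vertices `x a`, `z a`,
`y a`, the deletable vertices `xh a`, `zh a`, `yh a`, a source `s` and a sink `t`. -/
inductive GV where
  | x (a : ℕ)
  | xh (a : ℕ)
  | z (a : ℕ)
  | zh (a : ℕ)
  | y (a : ℕ)
  | yh (a : ℕ)
  | s
  | t
deriving DecidableEq

/-- Arcs of the synchronization gadget: the three paths
`X = (x n, xh n, x (n-1), ..., xh 1, x 0)`, `Z = (z n, zh n, ..., zh 1, z 0)`,
`Y = (y n, yh n, ..., yh 1, y 0)`, the cross arcs `(x a, z a)` and `(z a, y a)` for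
`a ≤ n`, and the arcs `(s, x n)`, `(x 0, t)`, `(y 0, t)`. -/
inductive Arc (n : ℕ) : GV → GV → Prop where
  | x_to_xh (a : ℕ) (h1 : 1 ≤ a) (h2 : a ≤ n) : Arc n (GV.x a) (GV.xh a)
  | xh_to_x (a : ℕ) (h1 : 1 ≤ a) (h2 : a ≤ n) : Arc n (GV.xh a) (GV.x (a - 1))
  | z_to_zh (a : ℕ) (h1 : 1 ≤ a) (h2 : a ≤ n) : Arc n (GV.z a) (GV.zh a)
  | zh_to_z (a : ℕ) (h1 : 1 ≤ a) (h2 : a ≤ n) : Arc n (GV.zh a) (GV.z (a - 1))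
  | y_to_yh (a : ℕ) (h1 : 1 ≤ a) (h2 : a ≤ n) : Arc n (GV.y a) (GV.yh a)
  | yh_to_y (a : ℕ) (h1 : 1 ≤ a) (h2 : a ≤ n) : Arc n (GV.yh a) (GV.y (a - 1))
  | cross_xz (a : ℕ) (h : a ≤ n) : Arc n (GV.x a) (GV.z a)
  | cross_zy (a : ℕ) (h : a ≤ n) : Arc n (GV.z a) (GV.y a)
  | s_edge : Arc n GV.s (GV.x n)
  | t_edge_x : Arc n (GV.x 0) GV.t
  | t_edge_y : Arc n (GV.y 0) GV.t

/-- `b` is reachable from `a` in the directed graph `G` with the vertex set `S`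
deleted. -/
def Reach {V : Type*} (G : V → V → Prop) (S : Set V) (a b : V) : Prop :=
  Relation.ReflTransGen (fun u v => u ∉ S ∧ v ∉ S ∧ G u v) a b

/-- In the synchronization gadget, if `S` consists of deletable vertices only, with
`S ∩ X = {xh a}` and `S ∩ Y = {yh b}` where `a < b`, then there is an `s`-to-`t` path
avoiding `S`. -/
theorem stmt15 (n a b : ℕ) (h1a : 1 ≤ a) (hab : a < b) (hbn : b ≤ n)
    (S : Set GV)
    (hSdel : S ⊆ {v | ∃ cc, v = GV.xh cc ∨ v = GV.zh cc ∨ v = GV.yh cc})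
    (hSX : ∀ cc, 1 ≤ cc → cc ≤ n → (GV.xh cc ∈ S ↔ cc = a))
    (hSY : ∀ cc, 1 ≤ cc → cc ≤ n → (GV.yh cc ∈ S ↔ cc = b)) :
    Reach (Arc n) S GV.s GV.t := by
  have hxS : ∀ c, GV.x c ∉ S := by
    intro c hc; obtain ⟨cc, h | h | h⟩ := hSdel hc <;> simp_all
  have hzS : ∀ c, GV.z c ∉ S := by
    intro c hc; obtain ⟨cc, h | h | h⟩ := hSdel hc <;> simp_all
  have hyS : ∀ c, GV.y c ∉ S := by
    intro c hc; obtain ⟨cc, h | h | h⟩ := hSdel hc <;> simp_all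
  have hsS : GV.s ∉ S := by
    intro hc; obtain ⟨cc, h | h | h⟩ := hSdel hc <;> simp_all
  have htS : GV.t ∉ S := by
    intro hc; obtain ⟨cc, h | h | h⟩ := hSdel hc <;> simp_all
  have hxhS : ∀ c, 1 ≤ c → c ≤ n → c ≠ a → GV.xh c ∉ S := fun c h1 h2 hne hc =>
    hne ((hSX c h1 h2).mp hc)
  have hyhS : ∀ c, 1 ≤ c → c ≤ n → c ≠ b → GV.yh c ∉ S := fun c h1 h2 hne hc =>
    hne ((hSY c h1 h2).mp hc)
  have han : a ≤ n := le_of_lt (lt_of_lt_of_le hab hbn)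
  -- go down X from x (a+k) to x a
  have hX : ∀ k, a + k ≤ n → Reach (Arc n) S (GV.x (a + k)) (GV.x a) := by
    intro k
    induction k with
    | zero => intro _; exact Relation.ReflTransGen.refl
    | succ k ih =>
      intro hk
      have h1 : 1 ≤ a + (k + 1) := by omega
      have hne : a + (k + 1) ≠ a := by omega
      have hstep1 : Reach (Arc n) S (GV.x (a + (k+1))) (GV.xh (a + (k+1))) :=
        Relation.ReflTransGen.single ⟨hxS _, hxhS _ h1 hk hne, Arc.x_to_xh _ h1 hk⟩
      have hstep2 : Reach (Arc n) S (GV.xh (a + (k+1))) (GV.x (a + k)) := by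
        have harc : Arc n (GV.xh (a + (k+1))) (GV.x (a + k)) := by
          have := Arc.xh_to_x (n := n) (a + (k+1)) h1 hk; simpa using this
        exact Relation.ReflTransGen.single ⟨hxhS _ h1 hk hne, hxS _, harc⟩
      exact hstep1.trans (hstep2.trans (ih (by omega)))
  -- go down Y from y k to y 0
  have hY : ∀ k, k ≤ a → Reach (Arc n) S (GV.y k) (GV.y 0) := by
    intro k
    induction k with
    | zero => intro _; exact Relation.ReflTransGen.refl
    | succ k ih =>
      intro hk
      have h1 : 1 ≤ k + 1 := by omega
      have h2 : k + 1 ≤ n := by omega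
      have hne : k + 1 ≠ b := by omega
      have hstep1 : Reach (Arc n) S (GV.y (k+1)) (GV.yh (k+1)) :=
        Relation.ReflTransGen.single ⟨hyS _, hyhS _ h1 h2 hne, Arc.y_to_yh _ h1 h2⟩
      have hstep2 : Reach (Arc n) S (GV.yh (k+1)) (GV.y k) := by
        have harc : Arc n (GV.yh (k+1)) (GV.y k) := by
          have := Arc.yh_to_y (n := n) (k+1) h1 h2; simpa using this
        exact Relation.ReflTransGen.single ⟨hyhS _ h1 h2 hne, hyS _, harc⟩
      exact hstep1.trans (hstep2.trans (ih (by omega)))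
  have hXn : Reach (Arc n) S (GV.x n) (GV.x a) := by
    have := hX (n - a) (by omega)
    simpa [Nat.add_sub_cancel' han] using this
  have step1 : Reach (Arc n) S GV.s (GV.x n) :=
    Relation.ReflTransGen.single ⟨hsS, hxS _, Arc.s_edge⟩
  have step2 : Reach (Arc n) S (GV.x a) (GV.z a) :=
    Relation.ReflTransGen.single ⟨hxS _, hzS _, Arc.cross_xz a han⟩
  have step3 : Reach (Arc n) S (GV.z a) (GV.y a) :=
    Relation.ReflTransGen.single ⟨hzS _, hyS _, Arc.cross_zy a han⟩
  have step4 : Reach (Arc n) S (GV.y 0) GV.t :=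
    Relation.ReflTransGen.single ⟨hyS _, htS, Arc.t_edge_y⟩
  exact step1.trans (hXn.trans (step2.trans (step3.trans ((hY a le_rfl).trans step4))))
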